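/- arXiv:2112.15002 — 3 statements merged into one kernel-verified Lean document; each statement's English description precedes it below -/
import Mathlib

section
/- Parameter-shift rule: let d ≥ 1, let G₁,…,G_p ∈ M_d(ℂ) be Hermitian unitary matrices, let O ∈ M_d(ℂ) be Hermitian, and let ρ ∈ M_d(ℂ) be a density matrix. Define f : ℝ^p → ℝ by f(θ₁,…,θ_p) = Tr[O · V_p(θ_p) ⋯ V_1(θ₁) · ρ · V_1(θ₁)† ⋯ V_p(θ_p)†], where V_j(θ_j) = exp(−i θ_j G_j). Then for every j ∈ {1,…,p} and every θ ∈ ℝ^p, ∂f/∂θ_j (θ) = f(θ + (π/4)e_j) − f(θ − (π/4)e_j), where e_j is the j-th standard basis vector of ℝ^p. -/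
open Matrix MeasureTheory
open scoped ComplexOrder

noncomputable section

/-- The rotation `W(θ) = exp(−iθG)` generated by a matrix `G`. -/
def Wrot {d : ℕ} (G : Matrix (Fin d) (Fin d) ℂ) (θ : ℝ) : Matrix (Fin d) (Fin d) ℂ :=
  NormedSpace.exp ((-(Complex.I * (θ : ℂ))) • G)

/-- The commuting part `O₁ = (O + G·O·G)/2` of `O` with respect to `G`. -/
def Opart1 {d : ℕ} (G O : Matrix (Fin d) (Fin d) ℂ) : Matrix (Fin d) (Fin d) ℂ :=
  (2⁻¹ : ℂ) • (O + G * O * G)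

/-- The anticommuting part `O₂ = (O − G·O·G)/2` of `O` with respect to `G`. -/
def Opart2 {d : ℕ} (G O : Matrix (Fin d) (Fin d) ℂ) : Matrix (Fin d) (Fin d) ℂ :=
  (2⁻¹ : ℂ) • (O - G * O * G)

/-! Since `G² = 1`, `exp(−itG) = cos t • 1 + sin t • (−iG)`, so with the other angles fixed the
circuit is `cos t • P + sin t • Q` for fixed matrices `P`, `Q`, and `f` restricted to the `j`-th
angle is `a cos² t + b sin² t + e cos t sin t`, a constant plus a combination of `cos 2t` and
`sin 2t`. Shifting `t` by `±π/4` shifts `2t` by `±π/2`, which turns the symmetric difference of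
such a function into its derivative. -/

theorem exp_smul_eq_cosh_add_sinh_of_mul_self_eq_one {𝔸 : Type*} [Ring 𝔸] [Algebra ℂ 𝔸]
    [TopologicalSpace 𝔸] [IsTopologicalRing 𝔸] [ContinuousSMul ℂ 𝔸] [T2Space 𝔸] {x : 𝔸}
    (hx : x * x = 1) (z : ℂ) :
    NormedSpace.exp (z • x) = Complex.cosh z • (1 : 𝔸) + Complex.sinh z • x := by
  have hx2 : ∀ k : ℕ, x ^ (2 * k) = 1 := fun k => by rw [pow_mul, sq, hx, one_pow]
  rw [NormedSpace.exp_eq_tsum ℂ]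
  refine HasSum.tsum_eq (HasSum.even_add_odd ?_ ?_)
  · convert (Complex.hasSum_cosh z).smul_const (1 : 𝔸) using 2 with k
    rw [smul_pow, hx2, smul_smul, div_eq_inv_mul]
  · convert (Complex.hasSum_sinh z).smul_const x using 2 with k
    rw [smul_pow, pow_succ x, hx2, one_mul, smul_smul, div_eq_inv_mul]

theorem Wrot_eq_cos_smul_add_sin_smul {d : ℕ} {G : Matrix (Fin d) (Fin d) ℂ} (hG : G * G = 1)
    (t : ℝ) : Wrot G t = (Real.cos t : ℂ) • 1 + (Real.sin t : ℂ) • (-Complex.I • G) := by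
  have hz : -(Complex.I * t) = -(t * Complex.I) := by ring
  rw [Wrot, exp_smul_eq_cosh_add_sinh_of_mul_self_eq_one hG, hz, Complex.cosh_neg,
    Complex.sinh_neg, Complex.cosh_mul_I, Complex.sinh_mul_I, Complex.ofReal_cos,
    Complex.ofReal_sin, smul_smul]
  congr 2
  ring

theorem List.exists_prod_reverse_ofFn_update_eq_mul_mul {M : Type*} [Monoid M] :
    ∀ {n : ℕ} (g : Fin n → M) (j : Fin n),
      ∃ A B : M, ∀ x, (List.ofFn (Function.update g j x)).reverse.prod = A * x * B
  | 0, _, j => j.elim0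
  | n + 1, g, j => by
    cases j using Fin.cases with
    | zero =>
      refine ⟨(List.ofFn fun i : Fin n => g i.succ).reverse.prod, 1, fun x => ?_⟩
      simp [List.ofFn_succ]
    | succ k =>
      obtain ⟨A, B, h⟩ := exists_prod_reverse_ofFn_update_eq_mul_mul (fun i => g i.succ) k
      refine ⟨A, B * g 0, fun x => ?_⟩
      have hcomp : (fun i => Function.update g k.succ x i.succ)
          = Function.update (fun i => g i.succ) k x :=
        Function.update_comp_eq_of_injective g (Fin.succ_injective _) k x
      simp [List.ofFn_succ, Function.update_of_ne (Fin.succ_ne_zero _).symm, hcomp, h, mul_assoc]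

theorem Matrix.re_trace_mul_mul_conjTranspose_smul_add_smul {n : Type*} [Fintype n]
    (O ρ P Q : Matrix n n ℂ) (c s : ℝ) :
    (O * (((c : ℂ) • P + (s : ℂ) • Q) * ρ * ((c : ℂ) • P + (s : ℂ) • Q)ᴴ)).trace.re
      = (O * (P * ρ * Pᴴ)).trace.re * c ^ 2 + (O * (Q * ρ * Qᴴ)).trace.re * s ^ 2
        + (O * (P * ρ * Qᴴ) + O * (Q * ρ * Pᴴ)).trace.re * (c * s) := by
  simp only [conjTranspose_add, conjTranspose_smul, Complex.star_def, Complex.conj_ofReal,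
    mul_add, add_mul, smul_mul_assoc, mul_smul_comm, trace_add, trace_smul,
    smul_eq_mul, Complex.add_re, Complex.re_ofReal_mul]
  ring

open Real in
def trigQuadratic (a b e t : ℝ) : ℝ := a * cos t ^ 2 + b * sin t ^ 2 + e * (cos t * sin t)

open Real in
theorem hasDerivAt_trigQuadratic (a b e t : ℝ) :
    HasDerivAt (trigQuadratic a b e)
      (trigQuadratic a b e (t + π / 4) - trigQuadratic a b e (t - π / 4)) t := by
  have hD : HasDerivAt (trigQuadratic a b e)
      (2 * (b - a) * (cos t * sin t) + e * (cos t ^ 2 - sin t ^ 2)) t := by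
    refine (((((hasDerivAt_cos t).fun_pow 2).const_mul a).add
      (((hasDerivAt_sin t).fun_pow 2).const_mul b)).add
      (((hasDerivAt_cos t).mul (hasDerivAt_sin t)).const_mul e)).congr_deriv ?_
    norm_num
    ring
  refine hD.congr_deriv ?_
  have h2 : √2 ^ 2 = 2 := Real.sq_sqrt (by norm_num)
  simp only [trigQuadratic, cos_add, sin_add, cos_sub, sin_sub, cos_pi_div_four, sin_pi_div_four]
  ring_nf
  rw [h2]
  ring

theorem parameter_shift_rule_general
    (d p : ℕ)
    (G : Fin p → Matrix (Fin d) (Fin d) ℂ)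
    (hGunit : ∀ j, G j * G j = 1)
    (O : Matrix (Fin d) (Fin d) ℂ)
    (ρ : Matrix (Fin d) (Fin d) ℂ)
    (f : (Fin p → ℝ) → ℝ)
    (hf : ∀ θ : Fin p → ℝ, f θ =
      ((O * (((List.ofFn fun j : Fin p => Wrot (G j) (θ j)).reverse.prod) * ρ *
        ((List.ofFn fun j : Fin p => Wrot (G j) (θ j)).reverse.prod)ᴴ)).trace.re))
    (j : Fin p) (θ : Fin p → ℝ) :
    deriv (fun t => f (Function.update θ j t)) (θ j)
      = f (Function.update θ j (θ j + Real.pi / 4))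
        - f (Function.update θ j (θ j - Real.pi / 4)) := by
  obtain ⟨A, B, hAB⟩ :=
    List.exists_prod_reverse_ofFn_update_eq_mul_mul (fun k => Wrot (G k) (θ k)) j
  set P := A * B
  set Q := A * (-Complex.I • G j) * B
  have hcircuit : ∀ t : ℝ,
      (List.ofFn fun k => Wrot (G k) (Function.update θ j t k)).reverse.prod
        = (Real.cos t : ℂ) • P + (Real.sin t : ℂ) • Q := fun t => by
    simp only [Function.apply_update (fun k => Wrot (G k)), hAB,
      Wrot_eq_cos_smul_add_sin_smul (hGunit j), mul_add, add_mul, mul_smul_comm, smul_mul_assoc,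
      mul_one, P, Q]
  obtain ⟨a, b, e, hslice⟩ :
      ∃ a b e, (fun t => f (Function.update θ j t)) = trigQuadratic a b e :=
    ⟨_, _, _, funext fun t => by
      rw [hf, hcircuit]
      exact Matrix.re_trace_mul_mul_conjTranspose_smul_add_smul O ρ P Q _ _⟩
  have hderiv := (hasDerivAt_trigQuadratic a b e (θ j)).deriv
  rwa [← hslice] at hderiv

/-- **Parameter-shift rule**: for `f(θ) = Tr[O · V_p(θ_p) ⋯ V_1(θ_1) · ρ · V_1(θ_1)† ⋯ V_p(θ_p)†]`
with `V_j(t) = exp(−i t G_j)` for Hermitian unitary generators `G_j`, one has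
`∂f/∂θ_j (θ) = f(θ + (π/4)e_j) − f(θ − (π/4)e_j)`. -/
theorem parameter_shift_rule
    (d p : ℕ) (hd : 1 ≤ d) (hp : 1 ≤ p)
    (G : Fin p → Matrix (Fin d) (Fin d) ℂ)
    (hGherm : ∀ j, (G j).IsHermitian) (hGunit : ∀ j, G j * G j = 1)
    (O : Matrix (Fin d) (Fin d) ℂ) (hO : O.IsHermitian)
    (ρ : Matrix (Fin d) (Fin d) ℂ) (hρ : ρ.PosSemidef) (hρtr : ρ.trace = 1)
    (f : (Fin p → ℝ) → ℝ)
    (hf : ∀ θ : Fin p → ℝ, f θ =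
      ((O * (((List.ofFn fun j : Fin p => Wrot (G j) (θ j)).reverse.prod) * ρ *
        ((List.ofFn fun j : Fin p => Wrot (G j) (θ j)).reverse.prod)ᴴ)).trace.re))
    (j : Fin p) (θ : Fin p → ℝ) :
    deriv (fun t => f (Function.update θ j t)) (θ j)
      = f (Function.update θ j (θ j + Real.pi / 4))
        - f (Function.update θ j (θ j - Real.pi / 4)) :=
  parameter_shift_rule_general d p G hGunit O ρ f hf j θ
end
end

section
/- Let d ≥ 1, let G ∈ M_d(ℂ) be a Hermitian unitary matrix, let O ∈ M_d(ℂ) be Hermitian, and let ρ₁, ρ₂ ∈ M_d(ℂ) be density matrices. With W(θ) = exp(−iθG), O₁ = (O + G·O·G)/2, and O₂ = (O − G·O·G)/2, one has (1/(2π)) ∫₀^{2π} Tr[O·W(θ)·ρ₁·W(θ)†] · Tr[O·W(θ)·ρ₂·W(θ)†] dθ = Tr[O₁ρ₁]·Tr[O₁ρ₂] + (1/2)·Tr[O₂ρ₁]·Tr[O₂ρ₂] + (1/2)·Tr[iO₂Gρ₁]·Tr[iO₂Gρ₂]. -/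
open Matrix MeasureTheory
open scoped ComplexOrder

noncomputable section

/-! Since `G² = 1`, `W(θ) = cos θ • 1 - i sin θ • G`, and conjugating `O = O₁ + O₂` (the parts of
`O` commuting and anticommuting with `G`) gives `W(θ)† O W(θ) = O₁ + cos 2θ • O₂ - sin 2θ • iO₂G`.
Each trace in the integrand is therefore `p + q cos 2θ - r sin 2θ`, and orthogonality of
`1, cos 2θ, sin 2θ` on `[0, 2π]` computes the average of the product. -/

theorem NormedSpace.exp_smul_of_mul_self_eq_one {𝔸 : Type*} [Ring 𝔸] [Algebra ℂ 𝔸]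
    [TopologicalSpace 𝔸] [IsTopologicalRing 𝔸] [ContinuousSMul ℂ 𝔸] [T2Space 𝔸] {a : 𝔸}
    (ha : a * a = 1) (z : ℂ) : exp (z • a) = Complex.cosh z • 1 + Complex.sinh z • a := by
  have hpow_even (n : ℕ) : a ^ (2 * n) = 1 := by rw [pow_mul, sq, ha, one_pow]
  rw [exp_eq_tsum ℂ]
  refine HasSum.tsum_eq (HasSum.even_add_odd ?_ ?_)
  · convert (Complex.hasSum_cosh z).smul_const (1 : 𝔸) using 2 with n
    rw [smul_pow, hpow_even, smul_smul, div_eq_inv_mul]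
  · convert (Complex.hasSum_sinh z).smul_const a using 2 with n
    rw [smul_pow, pow_succ a, hpow_even, one_mul, smul_smul, div_eq_inv_mul]

section Rotation

open Complex

variable {d : ℕ} {G : Matrix (Fin d) (Fin d) ℂ}

theorem Wrot_eq_of_mul_self_eq_one (hG : G * G = 1) (θ : ℝ) :
    Wrot G θ = (Real.cos θ : ℂ) • 1 - (Real.sin θ * I : ℂ) • G := by
  rw [Wrot, NormedSpace.exp_smul_of_mul_self_eq_one hG, cosh_neg, sinh_neg, mul_comm,
    cosh_mul_I, sinh_mul_I, neg_smul, ← sub_eq_add_neg, ofReal_cos, ofReal_sin]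

theorem conjTranspose_Wrot (hG : G.IsHermitian) (θ : ℝ) : (Wrot G θ)ᴴ = Wrot G (-θ) := by
  rw [Wrot, Wrot, ← exp_conjTranspose, conjTranspose_smul, hG.eq]
  congr 2
  simp

theorem conjTranspose_Wrot_mul_mul_Wrot (hGh : G.IsHermitian) (hG : G * G = 1)
    (O : Matrix (Fin d) (Fin d) ℂ) (θ : ℝ) :
    (Wrot G θ)ᴴ * O * Wrot G θ = Opart1 G O + (Real.cos (2 * θ) : ℂ) • Opart2 G O
      - (Real.sin (2 * θ) : ℂ) • (I • (Opart2 G O * G)) := by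
  have hpy : (Real.cos θ : ℂ) ^ 2 + (Real.sin θ : ℂ) ^ 2 = 1 := by
    exact_mod_cast Real.cos_sq_add_sin_sq θ
  rw [conjTranspose_Wrot hGh, Wrot_eq_of_mul_self_eq_one hG, Wrot_eq_of_mul_self_eq_one hG,
    Real.cos_neg, Real.sin_neg, Real.cos_two_mul', Real.sin_two_mul]
  push_cast
  simp only [Opart1, Opart2, sub_mul, mul_sub, smul_mul_assoc, mul_smul_comm, Matrix.one_mul,
    Matrix.mul_one, Matrix.mul_assoc, hG]
  linear_combination (norm := module)
    (2⁻¹ : ℂ) • hpy • (O + G * (O * G)) - ((Real.sin θ : ℂ) ^ 2 * I_sq) • (G * (O * G))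

theorem re_trace_mul_conj_Wrot (hGh : G.IsHermitian) (hG : G * G = 1)
    (O ρ : Matrix (Fin d) (Fin d) ℂ) (θ : ℝ) :
    (O * (Wrot G θ * ρ * (Wrot G θ)ᴴ)).trace.re
      = (Opart1 G O * ρ).trace.re + (Opart2 G O * ρ).trace.re * Real.cos (2 * θ)
        - ((I • (Opart2 G O * G)) * ρ).trace.re * Real.sin (2 * θ) := by
  have hcycle :
      (O * (Wrot G θ * ρ * (Wrot G θ)ᴴ)).trace = ((Wrot G θ)ᴴ * O * Wrot G θ * ρ).trace := by
    rw [← Matrix.mul_assoc, trace_mul_comm]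
    simp only [Matrix.mul_assoc]
  rw [hcycle, conjTranspose_Wrot_mul_mul_Wrot hGh hG]
  simp only [add_mul, sub_mul, smul_mul_assoc, trace_add, trace_sub, trace_smul, smul_eq_mul,
    sub_re, add_re, re_ofReal_mul]
  ring

end Rotation

section TrigonometricIntegrals

open Real

theorem integral_cos_nat_mul_zero_two_pi {n : ℕ} (hn : n ≠ 0) :
    ∫ θ in (0 : ℝ)..2 * π, cos (n * θ) = 0 := by
  rw [intervalIntegral.integral_comp_mul_left _ (Nat.cast_ne_zero.2 hn), integral_cos, mul_zero,
    sin_zero, sin_periodic.nat_mul_eq, sin_zero, sub_zero, smul_zero]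

theorem integral_sin_nat_mul_zero_two_pi (n : ℕ) :
    ∫ θ in (0 : ℝ)..2 * π, sin (n * θ) = 0 := by
  rcases eq_or_ne n 0 with rfl | hn
  · simp
  rw [intervalIntegral.integral_comp_mul_left _ (Nat.cast_ne_zero.2 hn), integral_sin, mul_zero,
    cos_zero, cos_nat_mul_two_pi, sub_self, smul_zero]

theorem integral_trig_mul_trig_zero_two_pi (p q r p' q' r' : ℝ) :
    ∫ θ in (0 : ℝ)..2 * π,
        (p + q * cos (2 * θ) - r * sin (2 * θ)) * (p' + q' * cos (2 * θ) - r' * sin (2 * θ))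
      = 2 * π * (p * p') + π * (q * q') + π * (r * r') := by
  have hprod (θ : ℝ) :
      (p + q * cos (2 * θ) - r * sin (2 * θ)) * (p' + q' * cos (2 * θ) - r' * sin (2 * θ))
        = (p * p' + (q * q' + r * r') / 2) + (p * q' + q * p') * cos ((2 : ℕ) * θ)
          - (p * r' + r * p') * sin ((2 : ℕ) * θ) + (q * q' - r * r') / 2 * cos ((4 : ℕ) * θ)
          - (q * r' + r * q') / 2 * sin ((4 : ℕ) * θ) := by
    have hc4 : cos ((4 : ℕ) * θ) = 2 * cos (2 * θ) ^ 2 - 1 := by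
      rw [← cos_two_mul]; push_cast; ring_nf
    have hs4 : sin ((4 : ℕ) * θ) = 2 * sin (2 * θ) * cos (2 * θ) := by
      rw [← sin_two_mul]; push_cast; ring_nf
    rw [hc4, hs4]
    push_cast
    linear_combination (r * r') * sin_sq_add_cos_sq (2 * θ)
  simp_rw [hprod]
  simp (disch := apply Continuous.intervalIntegrable; fun_prop) only
    [intervalIntegral.integral_add, intervalIntegral.integral_sub,
    intervalIntegral.integral_const_mul, intervalIntegral.integral_const,
    integral_cos_nat_mul_zero_two_pi two_ne_zero, integral_cos_nat_mul_zero_two_pi four_ne_zero,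
    integral_sin_nat_mul_zero_two_pi, smul_eq_mul]
  ring

end TrigonometricIntegrals

theorem expectation_product_trace_general
    (d : ℕ)
    (G O : Matrix (Fin d) (Fin d) ℂ)
    (hGherm : G.IsHermitian) (hGunit : G * G = 1)
    (ρ₁ ρ₂ : Matrix (Fin d) (Fin d) ℂ) :
    (1 / (2 * Real.pi)) * ∫ θ in (0:ℝ)..(2 * Real.pi),
        ((O * (Wrot G θ * ρ₁ * (Wrot G θ)ᴴ)).trace.re)
          * ((O * (Wrot G θ * ρ₂ * (Wrot G θ)ᴴ)).trace.re)
      = ((Opart1 G O * ρ₁).trace.re) * ((Opart1 G O * ρ₂).trace.re)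
        + (1 / 2) * ((Opart2 G O * ρ₁).trace.re) * ((Opart2 G O * ρ₂).trace.re)
        + (1 / 2) * (((Complex.I • (Opart2 G O * G)) * ρ₁).trace.re)
            * (((Complex.I • (Opart2 G O * G)) * ρ₂).trace.re) := by
  simp_rw [re_trace_mul_conj_Wrot hGherm hGunit, integral_trig_mul_trig_zero_two_pi]
  field_simp

/-- **Lemma 2**: for a Hermitian unitary `G`, a Hermitian observable `O` and density
matrices `ρ₁, ρ₂`, with `W(θ) = exp(−iθG)`, `O₁ = (O + GOG)/2` and `O₂ = (O − GOG)/2`,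
`E_θ Tr[O W ρ₁ W†]·Tr[O W ρ₂ W†] = Tr[O₁ρ₁]Tr[O₁ρ₂] + ½Tr[O₂ρ₁]Tr[O₂ρ₂] + ½Tr[iO₂Gρ₁]Tr[iO₂Gρ₂]`,
with `θ` uniform on `[0, 2π]`. -/
theorem expectation_product_trace
    (d : ℕ) (hd : 1 ≤ d)
    (G O : Matrix (Fin d) (Fin d) ℂ)
    (hGherm : G.IsHermitian) (hGunit : G * G = 1) (hO : O.IsHermitian)
    (ρ₁ ρ₂ : Matrix (Fin d) (Fin d) ℂ)
    (hρ₁ : ρ₁.PosSemidef) (hρ₁tr : ρ₁.trace = 1)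
    (hρ₂ : ρ₂.PosSemidef) (hρ₂tr : ρ₂.trace = 1) :
    (1 / (2 * Real.pi)) * ∫ θ in (0:ℝ)..(2 * Real.pi),
        ((O * (Wrot G θ * ρ₁ * (Wrot G θ)ᴴ)).trace.re)
          * ((O * (Wrot G θ * ρ₂ * (Wrot G θ)ᴴ)).trace.re)
      = ((Opart1 G O * ρ₁).trace.re) * ((Opart1 G O * ρ₂).trace.re)
        + (1 / 2) * ((Opart2 G O * ρ₁).trace.re) * ((Opart2 G O * ρ₂).trace.re)
        + (1 / 2) * (((Complex.I • (Opart2 G O * G)) * ρ₁).trace.re)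
            * (((Complex.I • (Opart2 G O * G)) * ρ₂).trace.re) :=
  expectation_product_trace_general d G O hGherm hGunit ρ₁ ρ₂
end
end

section
/- Let d ≥ 1, let G ∈ M_d(ℂ) be a Hermitian unitary matrix, let O ∈ M_d(ℂ) be Hermitian, and let ρ ∈ M_d(ℂ) be a density matrix. With O₂ = (O − G·O·G)/2, the function g(θ) = Tr[O · exp(−iθG) · ρ · exp(iθG)] is differentiable on ℝ with g′(θ) = −2·sin(2θ)·Tr[O₂ρ] − 2·cos(2θ)·Tr[iO₂Gρ]; in particular g′(θ) = g(θ + π/4) − g(θ − π/4) for all θ ∈ ℝ. -/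
/-!
Since `G² = 1`, `exp(iθG) = cos θ + i sin θ · G`. Splitting `O = O₁ + O₂` into the parts commuting
and anticommuting with `G`, conjugation gives
`exp(iθG) O exp(−iθG) = O₁ + cos 2θ · O₂ − sin 2θ · iO₂G`, so `g` is a sinusoid
`p + q cos 2θ − r sin 2θ` of frequency two. For such a function both the derivative formula and
the shift rule `g′(θ) = g(θ + π/4) − g(θ − π/4)` are trigonometric identities.
-/

open Matrix MeasureTheory
open scoped ComplexOrder

noncomputable section

section Involution

variable {A : Type*} [NormedRing A] [NormedAlgebra ℂ A] [CompleteSpace A] {x : A}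

theorem NormedSpace.exp_smul_of_mul_self_eq_one_s16 (hx : x * x = 1) (z : ℂ) :
    NormedSpace.exp (z • x) = Complex.cosh z • (1 : A) + Complex.sinh z • x := by
  have hx_even : ∀ k : ℕ, x ^ (2 * k) = 1 := fun k => by rw [pow_mul, sq, hx, one_pow]
  have hEven : HasSum (fun k : ℕ => ((2 * k).factorial⁻¹ : ℂ) • (z • x) ^ (2 * k))
      (Complex.cosh z • (1 : A)) := by
    convert (Complex.hasSum_cosh z).smul_const (1 : A) using 2 with k
    rw [smul_pow, hx_even, smul_smul, div_eq_inv_mul]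
  have hOdd : HasSum (fun k : ℕ => ((2 * k + 1).factorial⁻¹ : ℂ) • (z • x) ^ (2 * k + 1))
      (Complex.sinh z • x) := by
    convert (Complex.hasSum_sinh z).smul_const x using 2 with k
    rw [smul_pow, pow_succ x, hx_even, one_mul, smul_smul, div_eq_inv_mul]
  exact (NormedSpace.exp_series_hasSum_exp' (𝕂 := ℂ) (z • x)).unique (hEven.even_add_odd hOdd)

theorem NormedSpace.exp_mul_I_smul_of_mul_self_eq_one (hx : x * x = 1) (z : ℂ) :
    NormedSpace.exp ((z * Complex.I) • x) =
      Complex.cos z • (1 : A) + (Complex.sin z * Complex.I) • x := by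
  rw [NormedSpace.exp_smul_of_mul_self_eq_one_s16 hx, Complex.cosh_mul_I, Complex.sinh_mul_I]

end Involution

theorem Matrix.exp_mul_I_smul_of_mul_self_eq_one {n : Type*} [Fintype n] [DecidableEq n]
    {G : Matrix n n ℂ} (hG : G * G = 1) (z : ℂ) :
    NormedSpace.exp ((z * Complex.I) • G) =
      Complex.cos z • (1 : Matrix n n ℂ) + (Complex.sin z * Complex.I) • G := by
  let : NormedRing (Matrix n n ℂ) := Matrix.linftyOpNormedRing
  let : NormedAlgebra ℂ (Matrix n n ℂ) := Matrix.linftyOpNormedAlgebra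
  exact NormedSpace.exp_mul_I_smul_of_mul_self_eq_one hG z

theorem rotation_conj_eq_Opart {d : ℕ} {G : Matrix (Fin d) (Fin d) ℂ} (hG : G * G = 1)
    (O : Matrix (Fin d) (Fin d) ℂ) (z : ℂ) :
    (Complex.cos z • 1 + (Complex.sin z * Complex.I) • G) * O *
        (Complex.cos z • 1 - (Complex.sin z * Complex.I) • G) =
      Opart1 G O + Complex.cos (2 * z) • Opart2 G O
        - Complex.sin (2 * z) • (Complex.I • (Opart2 G O * G)) := by
  have hGOGG : G * O * G * G = G * O := by rw [Matrix.mul_assoc _ G G, hG, Matrix.mul_one]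
  simp only [Opart1, Opart2, Matrix.add_mul, Matrix.sub_mul, Matrix.mul_sub,
    smul_mul_assoc, mul_smul_comm, Matrix.one_mul, Matrix.mul_one, smul_smul, hGOGG,
    Complex.cos_two_mul, Complex.sin_two_mul]
  linear_combination (norm := module) (Complex.sin_sq_add_cos_sq z) • (G * O * G)
    - Complex.I_sq • (Complex.sin z ^ 2 • (G * O * G))

theorem re_trace_rotated_eq_sinusoid {d : ℕ} {G : Matrix (Fin d) (Fin d) ℂ} (hG : G * G = 1)
    (O ρ : Matrix (Fin d) (Fin d) ℂ) (θ : ℝ) :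
    (O * (NormedSpace.exp ((-(Complex.I * (θ : ℂ))) • G) * ρ *
        NormedSpace.exp ((Complex.I * (θ : ℂ)) • G))).trace.re =
      (Opart1 G O * ρ).trace.re + Real.cos (2 * θ) * (Opart2 G O * ρ).trace.re
        - Real.sin (2 * θ) * ((Complex.I • (Opart2 G O * G)) * ρ).trace.re := by
  have hW : NormedSpace.exp ((-(Complex.I * (θ : ℂ))) • G) =
      Complex.cos θ • 1 - (Complex.sin θ * Complex.I) • G := by
    rw [show -(Complex.I * θ) = -θ * Complex.I by ring, exp_mul_I_smul_of_mul_self_eq_one hG,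
      Complex.cos_neg, Complex.sin_neg, neg_mul, neg_smul, sub_eq_add_neg]
  have hW' : NormedSpace.exp ((Complex.I * (θ : ℂ)) • G) =
      Complex.cos θ • 1 + (Complex.sin θ * Complex.I) • G := by
    rw [mul_comm, exp_mul_I_smul_of_mul_self_eq_one hG]
  rw [hW, hW', ← Matrix.mul_assoc, ← Matrix.mul_assoc, trace_mul_cycle, ← Matrix.mul_assoc,
    rotation_conj_eq_Opart hG]
  simp only [Matrix.add_mul, Matrix.sub_mul, smul_mul_assoc, trace_add, trace_sub, trace_smul,
    smul_eq_mul, Complex.add_re, Complex.sub_re, ← Complex.ofReal_ofNat, ← Complex.ofReal_mul,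
    ← Complex.ofReal_cos, ← Complex.ofReal_sin, Complex.re_ofReal_mul]

section ParameterShift

variable {f : ℝ → ℝ} {p q r : ℝ}

theorem hasDerivAt_of_eq_sinusoid_two
    (hf : ∀ θ, f θ = p + Real.cos (2 * θ) * q - Real.sin (2 * θ) * r) (θ : ℝ) :
    HasDerivAt f (-2 * Real.sin (2 * θ) * q - 2 * Real.cos (2 * θ) * r) θ := by
  have hlin : HasDerivAt (fun t : ℝ => 2 * t) 2 θ := by
    simpa using (hasDerivAt_id θ).const_mul (2 : ℝ)
  have H := (((Real.hasDerivAt_cos _).comp θ hlin).mul_const q).const_add p |>.sub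
    (((Real.hasDerivAt_sin _).comp θ hlin).mul_const r)
  exact (H.congr_deriv (by ring)).congr_of_eventuallyEq (.of_forall hf)

theorem sub_shift_pi_div_four_of_eq_sinusoid_two
    (hf : ∀ θ, f θ = p + Real.cos (2 * θ) * q - Real.sin (2 * θ) * r) (θ : ℝ) :
    f (θ + Real.pi / 4) - f (θ - Real.pi / 4) =
      -2 * Real.sin (2 * θ) * q - 2 * Real.cos (2 * θ) * r := by
  rw [hf, hf, mul_add, mul_sub, show 2 * (Real.pi / 4) = Real.pi / 2 by ring,
    Real.cos_add_pi_div_two, Real.sin_add_pi_div_two, Real.cos_sub_pi_div_two,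
    Real.sin_sub_pi_div_two]
  ring

end ParameterShift

theorem deriv_rotated_trace_general
    (d : ℕ)
    (G O : Matrix (Fin d) (Fin d) ℂ)
    (hGunit : G * G = 1)
    (ρ : Matrix (Fin d) (Fin d) ℂ)
    (g : ℝ → ℝ)
    (hg : ∀ θ : ℝ, g θ =
      ((O * (NormedSpace.exp ((-(Complex.I * (θ : ℂ))) • G) * ρ *
        NormedSpace.exp ((Complex.I * (θ : ℂ)) • G))).trace.re)) :
    (∀ θ : ℝ, DifferentiableAt ℝ g θ)
    ∧ (∀ θ : ℝ, deriv g θ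
        = -2 * Real.sin (2 * θ) * ((Opart2 G O * ρ).trace.re)
          - 2 * Real.cos (2 * θ) * (((Complex.I • (Opart2 G O * G)) * ρ).trace.re))
    ∧ (∀ θ : ℝ, deriv g θ = g (θ + Real.pi / 4) - g (θ - Real.pi / 4)) := by
  have hsinusoid : ∀ θ, g θ = (Opart1 G O * ρ).trace.re
      + Real.cos (2 * θ) * (Opart2 G O * ρ).trace.re
      - Real.sin (2 * θ) * ((Complex.I • (Opart2 G O * G)) * ρ).trace.re := fun θ => by
    rw [hg, re_trace_rotated_eq_sinusoid hGunit]
  have hderiv := hasDerivAt_of_eq_sinusoid_two hsinusoid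
  refine ⟨fun θ => (hderiv θ).differentiableAt, fun θ => (hderiv θ).deriv, fun θ => ?_⟩
  rw [(hderiv θ).deriv, sub_shift_pi_div_four_of_eq_sinusoid_two hsinusoid]

/-- With `g(θ) = Tr[O · exp(−iθG) · ρ · exp(iθG)]` for a Hermitian unitary `G`,
Hermitian `O` and density matrix `ρ`, and `O₂ = (O − GOG)/2`, the function `g` is
differentiable with `g′(θ) = −2sin(2θ)·Tr[O₂ρ] − 2cos(2θ)·Tr[iO₂Gρ]`; in particular
`g′(θ) = g(θ + π/4) − g(θ − π/4)`. -/
theorem deriv_rotated_trace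
    (d : ℕ) (hd : 1 ≤ d)
    (G O : Matrix (Fin d) (Fin d) ℂ)
    (hGherm : G.IsHermitian) (hGunit : G * G = 1) (hO : O.IsHermitian)
    (ρ : Matrix (Fin d) (Fin d) ℂ) (hρ : ρ.PosSemidef) (hρtr : ρ.trace = 1)
    (g : ℝ → ℝ)
    (hg : ∀ θ : ℝ, g θ =
      ((O * (NormedSpace.exp ((-(Complex.I * (θ : ℂ))) • G) * ρ *
        NormedSpace.exp ((Complex.I * (θ : ℂ)) • G))).trace.re)) :
    (∀ θ : ℝ, DifferentiableAt ℝ g θ)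
    ∧ (∀ θ : ℝ, deriv g θ
        = -2 * Real.sin (2 * θ) * ((Opart2 G O * ρ).trace.re)
          - 2 * Real.cos (2 * θ) * (((Complex.I • (Opart2 G O * G)) * ρ).trace.re))
    ∧ (∀ θ : ℝ, deriv g θ = g (θ + Real.pi / 4) - g (θ - Real.pi / 4)) :=
  deriv_rotated_trace_general d G O hGunit ρ g hg
end
end
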